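/- Let x̄ ∈ ℝⁿ (n = N·D) be a block-sparse signal with block support T (x̄ₖ = 0 for k ∉ T), let A ∈ ℝ^{m×n}, and suppose A_T has full column rank. Let x̂ ∈ ℝⁿ satisfy A x̂ = A x̄ + v and write δx = x̂ − x̄. If ‖δx_{T^c}‖ ≤ 2√N ‖A† v‖ (with A of full row rank and A† = Aᵀ(AAᵀ)⁻¹), then ‖δx_T‖ ≤ ‖A_T† v‖ + 2√N ‖A_T† A_{T^c}‖ ‖A† v‖, where ‖A_T† A_{T^c}‖ denotes the ℓ₂ operator norm. -/

import Mathlib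

/-!
Since `A δx = v` and `A δx = A_T δx_T + A_{Tᶜ} δx_{Tᶜ}`, the left inverse `A_T†` (which exists
because `A_T` has full column rank) gives `δx_T = A_T† v - A_T† A_{Tᶜ} δx_{Tᶜ}`; the triangle
inequality, the operator-norm bound and the assumed bound on `δx_{Tᶜ}` finish the proof.
-/

open scoped BigOperators
open Matrix

noncomputable section

/-- The Euclidean (`ℓ₂`) norm of a finitely-indexed real vector. -/
def l2norm {ι : Type*} [Fintype ι] (x : ι → ℝ) : ℝ :=
  Real.sqrt (∑ i, (x i) ^ 2)

/-- The `ℓ₂` operator norm of a real matrix. -/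
def l2opNorm {ι κ : Type*} [Fintype ι] [Fintype κ] [DecidableEq κ] (M : Matrix ι κ ℝ) : ℝ :=
  ‖LinearMap.toContinuousLinearMap (Matrix.toEuclideanLin M)‖

/-- The approximation `F_α` to the indicator of nonzeroness. -/
def Fa (α w : ℝ) : ℝ :=
  if |w| ≤ 1 / α then 2 * α * |w| - α ^ 2 * w ^ 2 else 1

/-- The `k`-th block (of length `D`) of a block vector. -/
def blk {N D : ℕ} (x : Fin N × Fin D → ℝ) (k : Fin N) : Fin D → ℝ :=
  fun j => x (k, j)

/-- The cost function `J(x) = ∑ₖ F_α(‖xₖ‖)`. -/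
def J {N D : ℕ} (α : ℝ) (x : Fin N × Fin D → ℝ) : ℝ :=
  ∑ k, Fa α (l2norm (blk x k))

/-- Pseudo-inverse `A† = Aᵀ (A Aᵀ)⁻¹` of a full-row-rank matrix. -/
def pinvR {ι κ : Type*} [Fintype ι] [Fintype κ] [DecidableEq ι] (A : Matrix ι κ ℝ) :
    Matrix κ ι ℝ :=
  Aᵀ * (A * Aᵀ)⁻¹

/-- Pseudo-inverse `A† = (Aᵀ A)⁻¹ Aᵀ` of a full-column-rank matrix. -/
def pinvC {ι κ : Type*} [Fintype ι] [Fintype κ] [DecidableEq κ] (A : Matrix ι κ ℝ) :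
    Matrix κ ι ℝ :=
  (Aᵀ * A)⁻¹ * Aᵀ

/-- The submatrix `A_T` formed by the column blocks of `A` indexed by `T`. -/
def subCols {ι : Type*} {N D : ℕ} (A : Matrix ι (Fin N × Fin D) ℝ) (T : Finset (Fin N)) :
    Matrix ι (↥T × Fin D) ℝ :=
  A.submatrix id (fun p => ((p.1 : Fin N), p.2))

/-- The subvector `x_T` formed by the blocks of `x` indexed by `T`. -/
def subVec {N D : ℕ} (x : Fin N × Fin D → ℝ) (T : Finset (Fin N)) : ↥T × Fin D → ℝ :=
  fun p => x ((p.1 : Fin N), p.2)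

section L2Norm

variable {ι κ : Type*} [Fintype ι] [Fintype κ]

lemma l2norm_eq_norm_toLp (x : ι → ℝ) : l2norm x = ‖WithLp.toLp 2 x‖ := by
  simp [l2norm, EuclideanSpace.norm_eq]

lemma l2norm_sub_le (x y : ι → ℝ) : l2norm (x - y) ≤ l2norm x + l2norm y := by
  simpa only [l2norm_eq_norm_toLp, WithLp.toLp_sub] using norm_sub_le _ _

lemma l2opNorm_nonneg [DecidableEq κ] (M : Matrix ι κ ℝ) : 0 ≤ l2opNorm M :=
  norm_nonneg _

lemma l2norm_mulVec_le [DecidableEq κ] (M : Matrix ι κ ℝ) (x : κ → ℝ) :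
    l2norm (M *ᵥ x) ≤ l2opNorm M * l2norm x := by
  rw [l2norm_eq_norm_toLp, l2norm_eq_norm_toLp]
  exact (LinearMap.toContinuousLinearMap (toEuclideanLin M)).le_opNorm (WithLp.toLp 2 x)

end L2Norm

section Gram

variable {R m n : Type*} [Field R] [LinearOrder R] [IsStrictOrderedRing R]
  [Fintype m] [Fintype n] [DecidableEq n]

lemma isUnit_det_transpose_mul_self_of_rank_eq {B : Matrix m n R}
    (hB : B.rank = Fintype.card n) : IsUnit (Bᵀ * B).det := by
  have hsurj : Function.Surjective (Bᵀ * B).mulVec := by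
    rw [← Matrix.coe_mulVecLin, ← LinearMap.range_eq_top]
    apply Submodule.eq_top_of_finrank_eq
    rw [← Matrix.rank, rank_transpose_mul_self, hB, Module.finrank_pi]
  exact (isUnit_iff_isUnit_det _).mp (mulVec_surjective_iff_isUnit.mp hsurj)

lemma pinvC_mul_self_of_rank_eq {B : Matrix m n ℝ} (hB : B.rank = Fintype.card n) :
    pinvC B * B = 1 := by
  rw [pinvC, Matrix.mul_assoc, nonsing_inv_mul _ (isUnit_det_transpose_mul_self_of_rank_eq hB)]

end Gram

section Blocks

variable {ι : Type*} {N D : ℕ}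

lemma mulVec_eq_subCols_mulVec_add (A : Matrix ι (Fin N × Fin D) ℝ) (T : Finset (Fin N))
    (x : Fin N × Fin D → ℝ) :
    A *ᵥ x = subCols A T *ᵥ subVec x T + subCols A Tᶜ *ᵥ subVec x Tᶜ := by
  funext i
  simp only [mulVec, dotProduct, Pi.add_apply, subCols, subVec, submatrix_apply, id_eq,
    Fintype.sum_prod_type]
  rw [← Finset.sum_add_sum_compl T, ← Finset.sum_coe_sort T, ← Finset.sum_coe_sort Tᶜ]

lemma subVec_eq_pinvC_mulVec_sub [Fintype ι] (A : Matrix ι (Fin N × Fin D) ℝ) (T : Finset (Fin N))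
    (hcol : (subCols A T).rank = Fintype.card (↥T × Fin D)) (x : Fin N × Fin D → ℝ) :
    subVec x T = pinvC (subCols A T) *ᵥ (A *ᵥ x) -
      (pinvC (subCols A T) * subCols A Tᶜ) *ᵥ subVec x Tᶜ := by
  rw [mulVec_eq_subCols_mulVec_add A T x, mulVec_add, mulVec_mulVec, mulVec_mulVec,
    pinvC_mul_self_of_rank_eq hcol, one_mulVec, add_sub_cancel_right]

end Blocks

theorem onsupport_deviation_general {m N D : ℕ} (A : Matrix (Fin m) (Fin N × Fin D) ℝ)
    (xbar xhat : Fin N × Fin D → ℝ) (v : Fin m → ℝ) (T : Finset (Fin N))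
    (hcol : (subCols A T).rank = Fintype.card (↥T × Fin D))
    (hfeas : A *ᵥ xhat = A *ᵥ xbar + v)
    (hTc : l2norm (subVec (xhat - xbar) Tᶜ) ≤ 2 * Real.sqrt N * l2norm (pinvR A *ᵥ v)) :
    l2norm (subVec (xhat - xbar) T) ≤
      l2norm (pinvC (subCols A T) *ᵥ v) +
        2 * Real.sqrt N * l2opNorm (pinvC (subCols A T) * subCols A Tᶜ) *
          l2norm (pinvR A *ᵥ v) := by
  set P := pinvC (subCols A T)
  set C := subCols A Tᶜ
  have hAδ : A *ᵥ (xhat - xbar) = v := by rw [mulVec_sub, hfeas, add_sub_cancel_left]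
  have hoff : l2opNorm (P * C) * l2norm (subVec (xhat - xbar) Tᶜ) ≤
      l2opNorm (P * C) * (2 * Real.sqrt N * l2norm (pinvR A *ᵥ v)) :=
    mul_le_mul_of_nonneg_left hTc (l2opNorm_nonneg _)
  calc l2norm (subVec (xhat - xbar) T)
      = l2norm (P *ᵥ v - (P * C) *ᵥ subVec (xhat - xbar) Tᶜ) := by
        rw [subVec_eq_pinvC_mulVec_sub A T hcol, hAδ]
    _ ≤ l2norm (P *ᵥ v) + l2opNorm (P * C) * l2norm (subVec (xhat - xbar) Tᶜ) :=
        (l2norm_sub_le _ _).trans (add_le_add_right (l2norm_mulVec_le _ _) _)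
    _ ≤ l2norm (P *ᵥ v) + 2 * Real.sqrt N * l2opNorm (P * C) * l2norm (pinvR A *ᵥ v) := by
        linarith

/-- Bound on the on-support deviation: if `A x̂ = A x̄ + v` and
`‖δx_{Tᶜ}‖ ≤ 2√N ‖A† v‖`, then
`‖δx_T‖ ≤ ‖A_T† v‖ + 2√N ‖A_T† A_{Tᶜ}‖ ‖A† v‖`. -/
theorem onsupport_deviation {m N D : ℕ} (A : Matrix (Fin m) (Fin N × Fin D) ℝ)
    (xbar xhat : Fin N × Fin D → ℝ) (v : Fin m → ℝ) (T : Finset (Fin N))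
    (hsupp : ∀ k ∉ T, blk xbar k = 0)
    (hrow : A.rank = m)
    (hcol : (subCols A T).rank = Fintype.card (↥T × Fin D))
    (hfeas : A *ᵥ xhat = A *ᵥ xbar + v)
    (hTc : l2norm (subVec (xhat - xbar) Tᶜ) ≤ 2 * Real.sqrt N * l2norm (pinvR A *ᵥ v)) :
    l2norm (subVec (xhat - xbar) T) ≤
      l2norm (pinvC (subCols A T) *ᵥ v) +
        2 * Real.sqrt N * l2opNorm (pinvC (subCols A T) * subCols A Tᶜ) *
          l2norm (pinvR A *ᵥ v) :=
  onsupport_deviation_general A xbar xhat v T hcol hfeas hTc
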